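/- arXiv:2508.06935 — 3 statements merged into one kernel-verified Lean document; each statement's English description precedes it below -/
import Mathlib

section
/- Let ℋ = (𝒰, ℱ, 𝒰*) be a history graph for (o,T) for the j-threshold Consensus Process. Then, as an inequality of real numbers, (Φ_V(G) − j)·|𝒰| + 1 ≤ (Φ_V(G) − j + 1)·|𝒰*|. -/
open Classical
noncomputable section

namespace Paper

variable {V : Type*}

/-- Number of neighbours of `x` whose value is `1` (`true`). -/
def cCount (G : SimpleGraph V) [DecidableRel G.Adj] [∀ v, Fintype (G.neighborSet v)]
    (η : V → Bool) (x : V) : ℕ :=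
  ((G.neighborFinset x).filter fun y => η y = true).card

/-- The `j`-neighbour Bootstrap Percolation with noise set `N` and initial configuration `ξ`. -/
noncomputable def bootstrapPerc (G : SimpleGraph V) [DecidableRel G.Adj]
    [∀ v, Fintype (G.neighborSet v)] (j : ℕ) (N : Set (V × ℕ)) (ξ : V → Bool) :
    ℕ → V → Bool
  | 0 => ξ
  | t + 1 => fun x =>
      if (x, t + 1) ∈ N then false
      else bootstrapPerc G j N ξ t x || decide (j ≤ cCount G (bootstrapPerc G j N ξ t) x)

/-- The `j`-threshold Consensus Process with noise set `N` and initial configuration `ξ`. -/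
noncomputable def consensus (G : SimpleGraph V) [DecidableRel G.Adj]
    [∀ v, Fintype (G.neighborSet v)] (j : ℕ) (N : Set (V × ℕ)) (ξ : V → Bool) :
    ℕ → V → Bool
  | 0 => ξ
  | t + 1 => fun x =>
      if (x, t + 1) ∈ N then false
      else decide (j ≤ cCount G (consensus G j N ξ t) x)

/-- `∂_E K`: number of edges with exactly one endpoint in `K`. -/
def edgeBoundaryCard (G : SimpleGraph V) [DecidableRel G.Adj]
    [∀ v, Fintype (G.neighborSet v)] (K : Finset V) : ℕ :=
  ∑ x ∈ K, ((G.neighborFinset x).filter fun y => y ∉ K).card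

/-- The edge expansion constant `Φ_E(G)`. -/
noncomputable def edgeExpansion (G : SimpleGraph V) [DecidableRel G.Adj]
    [∀ v, Fintype (G.neighborSet v)] : ℝ :=
  sInf {r : ℝ | ∃ K : Finset V, K.Nonempty ∧ r = (edgeBoundaryCard G K : ℝ) / (K.card : ℝ)}

/-- `∂_V K`: number of vertices outside `K` adjacent to a vertex of `K`. -/
def vertexBoundaryCard [DecidableEq V] (G : SimpleGraph V) [DecidableRel G.Adj]
    [∀ v, Fintype (G.neighborSet v)] (K : Finset V) : ℕ :=
  ((K.biUnion fun x => G.neighborFinset x) \ K).card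

/-- The vertex expansion constant `Φ_V(G)`. -/
noncomputable def vertexExpansion [DecidableEq V] (G : SimpleGraph V) [DecidableRel G.Adj]
    [∀ v, Fintype (G.neighborSet v)] : ℝ :=
  sInf {r : ℝ | ∃ K : Finset V, K.Nonempty ∧ r = (vertexBoundaryCard G K : ℝ) / (K.card : ℝ)}

/-- A history graph `(𝒰, ℱ, 𝒰*)` for `(o, T)`.  If `bp = true` it is a history graph for the
`j`-neighbour Bootstrap Percolation (one outgoing straight edge and `deg x − j + 1` outgoing
oblique edges at every vertex of `𝒰 \ 𝒰*`); if `bp = false` it is a history graph for the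
`j`-threshold Consensus Process (no straight edges and `deg x − j + 1` outgoing oblique edges). -/
structure HistoryGraph (G : SimpleGraph V) [DecidableRel G.Adj]
    [∀ v, Fintype (G.neighborSet v)] (j : ℕ) (o : V) (T : ℕ) (bp : Bool) where
  U : Finset (V × ℕ)
  F : Finset ((V × ℕ) × (V × ℕ))
  Ustar : Finset (V × ℕ)
  ustar_subset : Ustar ⊆ U
  edge_mem_fst : ∀ e ∈ F, e.1 ∈ U
  edge_mem_snd : ∀ e ∈ F, e.2 ∈ U
  edge_time : ∀ e ∈ F, e.1.2 = e.2.2 + 1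
  edge_space : ∀ e ∈ F, e.1.1 = e.2.1 ∨ G.Adj e.1.1 e.2.1
  conn : ∀ u ∈ U, ∀ v ∈ U,
    Relation.ReflTransGen (fun a b => (a, b) ∈ F ∨ (b, a) ∈ F) u v
  root_mem : (o, T) ∈ U
  time_range : ∀ u ∈ U, u ≠ (o, T) → 1 ≤ u.2 ∧ u.2 ≤ T
  time_one_star : ∀ u ∈ U, u.2 = 1 → u ∈ Ustar
  star_no_out : ∀ u ∈ Ustar, ∀ e ∈ F, e.1 ≠ u
  straight_count : ∀ u ∈ U, u ∉ Ustar →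
      (F.filter fun e => e.1 = u ∧ e.2.1 = u.1).card = cond bp 1 0
  oblique_count : ∀ u ∈ U, u ∉ Ustar →
      (F.filter fun e => e.1 = u ∧ e.2.1 ≠ u.1).card = G.degree u.1 + 1 - j

/-- The strong product `G ⊠ ℕ`. -/
def strongProd (G : SimpleGraph V) : SimpleGraph (V × ℕ) where
  Adj p q := p ≠ q ∧ (p.2 ≤ q.2 + 1 ∧ q.2 ≤ p.2 + 1) ∧ (p.1 = q.1 ∨ G.Adj p.1 q.1)
  symm := by
    constructor
    rintro p q ⟨h1, ⟨h2, h3⟩, h4⟩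
    exact ⟨h1.symm, ⟨h3, h2⟩, h4.elim (fun e => Or.inl e.symm) fun a => Or.inr a.symm⟩
  loopless := ⟨fun p h => h.1 rfl⟩

/-- The connected component of `p` in the subgraph of `G ⊠ ℕ` induced by `Z`. -/
def cluster (G : SimpleGraph V) (Z : Set (V × ℕ)) (p : V × ℕ) : Set (V × ℕ) :=
  {q | p ∈ Z ∧ q ∈ Z ∧
    Relation.ReflTransGen (fun a b => a ∈ Z ∧ b ∈ Z ∧ (strongProd G).Adj a b) p q}

/-- The witness-root property defining `j ≤ j̄`. -/
def radialGood (G : SimpleGraph V) [DecidableRel G.Adj] [∀ v, Fintype (G.neighborSet v)]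
    (j : ℕ) : Prop :=
  ∃ r : V, ∀ x : V,
    j ≤ ((G.neighborFinset x).filter fun y => G.dist r y = G.dist r x + 1).card

end Paper

/-!
Fix a time `t` and let `A` be the set of positions of the vertices of `𝒰 \ 𝒰*` at time `t`.
Such a vertex `(x, t)` has `deg x − j + 1` oblique edges, landing on distinct neighbours `y` of `x`
with `(y, t − 1) ∈ 𝒰`, so fewer than `j` neighbours of `x` lie outside the positions `K` of `𝒰` at
time `t − 1`. Hence `Φ_V(G) |A| ≤ |∂_V A| ≤ |K| + (j − 1) |A|`. Summing over `t`, the sets `K`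
account for every vertex of `𝒰` except the root `(o, T)`, which gives
`Φ_V(G) |𝒰 \ 𝒰*| ≤ (j − 1) |𝒰 \ 𝒰*| + |𝒰| − 1`, a rearrangement of the claim.
-/

namespace Paper

open Finset

variable {V : Type*} [DecidableEq V] {G : SimpleGraph V} [DecidableRel G.Adj]
  [∀ v, Fintype (G.neighborSet v)]

theorem vertexExpansion_mul_card_le (A : Finset V) :
    vertexExpansion G * #A ≤ vertexBoundaryCard G A := by
  rcases A.eq_empty_or_nonempty with rfl | hA
  · simp
  have hle : vertexExpansion G ≤ vertexBoundaryCard G A / #A :=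
    csInf_le ⟨0, by rintro r ⟨K, -, rfl⟩; positivity⟩ ⟨A, hA, rfl⟩
  rwa [le_div_iff₀ (by exact_mod_cast hA.card_pos)] at hle

theorem vertexBoundaryCard_le_card_add_sum (A K : Finset V) :
    vertexBoundaryCard G A ≤ #K + ∑ x ∈ A, #{y ∈ G.neighborFinset x | y ∉ K} := by
  calc vertexBoundaryCard G A
      ≤ #(K ∪ A.biUnion fun x => {y ∈ G.neighborFinset x | y ∉ K}) := by
        refine card_le_card fun z hz => ?_
        simp only [mem_sdiff, mem_biUnion] at hz
        obtain ⟨⟨x, hx, hzx⟩, -⟩ := hz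
        by_cases hzK : z ∈ K
        · exact mem_union_left _ hzK
        · exact mem_union_right _ (mem_biUnion.mpr ⟨x, hx, mem_filter.mpr ⟨hzx, hzK⟩⟩)
    _ ≤ #K + #(A.biUnion fun x => {y ∈ G.neighborFinset x | y ∉ K}) := card_union_le _ _
    _ ≤ #K + ∑ x ∈ A, #{y ∈ G.neighborFinset x | y ∉ K} := by gcongr; exact card_biUnion_le

theorem vertexExpansion_mul_card_le_of_card_neighbors_not_mem_lt {A K : Finset V} {j : ℕ}
    (h : ∀ x ∈ A, #{y ∈ G.neighborFinset x | y ∉ K} < j) :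
    vertexExpansion G * #A ≤ #K + (j - 1) * #A := by
  have hsum : (∑ x ∈ A, #{y ∈ G.neighborFinset x | y ∉ K} : ℝ) ≤ ∑ _x ∈ A, ((j : ℝ) - 1) :=
    sum_le_sum fun x hx => by rw [le_sub_iff_add_le]; exact_mod_cast h x hx
  have hbound : (vertexBoundaryCard G A : ℝ) ≤
      #K + ∑ x ∈ A, (#{y ∈ G.neighborFinset x | y ∉ K} : ℝ) := by
    exact_mod_cast vertexBoundaryCard_le_card_add_sum A K
  rw [sum_const, nsmul_eq_mul] at hsum
  linarith [vertexExpansion_mul_card_le (G := G) A]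

namespace HistoryGraph

variable {j : ℕ} {o : V} {T : ℕ} {bp : Bool} (H : HistoryGraph G j o T bp)

/-- The positions `y` with `(y, t - 1) ∈ 𝒰`; written with `u.2 + 1 = t` so that it is empty
for `t = 0` rather than the positions at time `0`. -/
def positionsBefore (t : ℕ) : Finset V :=
  {u ∈ H.U | u.2 + 1 = t}.image Prod.fst

theorem time_le {u : V × ℕ} (hu : u ∈ H.U) : u.2 ≤ T := by
  by_cases h : u = (o, T)
  · rw [h]
  · exact (H.time_range u hu h).2

theorem snd_fst_mem_positionsBefore {e : (V × ℕ) × (V × ℕ)} (he : e ∈ H.F) :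
    e.2.1 ∈ H.positionsBefore e.1.2 :=
  mem_image_of_mem _ (mem_filter.mpr ⟨H.edge_mem_snd e he, (H.edge_time e he).symm⟩)

theorem card_neighbors_not_mem_positionsBefore_lt {w : V × ℕ} (hw : w ∈ H.U \ H.Ustar) :
    #{y ∈ G.neighborFinset w.1 | y ∉ H.positionsBefore w.2} < j := by
  obtain ⟨hwU, hwS⟩ := mem_sdiff.mp hw
  have hin : G.degree w.1 + 1 - j ≤ #{y ∈ G.neighborFinset w.1 | y ∈ H.positionsBefore w.2} := by
    have hcnt : #{e ∈ H.F | e.1 = w ∧ e.2.1 ≠ w.1} = G.degree w.1 + 1 - j := by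
      convert H.oblique_count w hwU hwS
    rw [← hcnt]
    refine card_le_card_of_injOn (fun e => e.2.1) (fun e he => ?_) (fun e he e' he' hee => ?_)
    · obtain ⟨heF, rfl, hne⟩ := mem_filter.mp he
      have hadj := (H.edge_space e heF).resolve_left (Ne.symm hne)
      exact mem_filter.mpr
        ⟨(G.mem_neighborFinset _ _).mpr hadj, H.snd_fst_mem_positionsBefore heF⟩
    · obtain ⟨heF, rfl, -⟩ := mem_filter.mp he
      obtain ⟨he'F, hee', -⟩ := mem_filter.mp he'
      have htime := (H.edge_time e heF).symm.trans (hee' ▸ H.edge_time e' he'F)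
      exact Prod.ext hee'.symm (Prod.ext hee (by omega))
  have hsplit := card_filter_add_card_filter_not (s := G.neighborFinset w.1)
    (p := fun y => y ∈ H.positionsBefore w.2)
  rw [G.card_neighborFinset_eq_degree] at hsplit
  omega

theorem vertexExpansion_mul_card_slice_le (t : ℕ) :
    vertexExpansion G * #{u ∈ H.U \ H.Ustar | u.2 = t} ≤
      #{u ∈ H.U | u.2 + 1 = t} + (j - 1) * #{u ∈ H.U \ H.Ustar | u.2 = t} := by
  set S := {u ∈ H.U \ H.Ustar | u.2 = t}
  have hcard : #(S.image Prod.fst) = #S := card_image_of_injOn fun a ha b hb hab =>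
    Prod.ext hab ((mem_filter.mp ha).2.trans (mem_filter.mp hb).2.symm)
  have hpos : (#(H.positionsBefore t) : ℝ) ≤ #{u ∈ H.U | u.2 + 1 = t} := by
    exact_mod_cast card_image_le
  have key := vertexExpansion_mul_card_le_of_card_neighbors_not_mem_lt
    (A := S.image Prod.fst) (K := H.positionsBefore t) fun x hx => by
      obtain ⟨w, hw, rfl⟩ := mem_image.mp hx
      obtain ⟨hwD, rfl⟩ := mem_filter.mp hw
      exact H.card_neighbors_not_mem_positionsBefore_lt hwD
  rw [hcard] at key
  linarith

theorem vertexExpansion_mul_card_sdiff_le :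
    vertexExpansion G * #(H.U \ H.Ustar) ≤ (j - 1) * #(H.U \ H.Ustar) + (#H.U - 1) := by
  set times := (H.U \ H.Ustar).image Prod.snd
  have hslices : #(H.U \ H.Ustar) = ∑ t ∈ times, #{u ∈ H.U \ H.Ustar | u.2 = t} :=
    card_eq_sum_card_image _ _
  have hbefore : ∑ t ∈ times, #{u ∈ H.U | u.2 + 1 = t} + 1 ≤ #H.U := by
    rw [sum_card_fiberwise_eq_card_filter]
    refine card_lt_card (filter_ssubset.mpr ⟨(o, T), H.root_mem, fun hT => ?_⟩)
    obtain ⟨u, hu, hut⟩ := mem_image.mp hT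
    have := H.time_le (mem_sdiff.mp hu).1
    simp only at hut
    omega
  have hsum := sum_le_sum fun t (_ : t ∈ times) => H.vertexExpansion_mul_card_slice_le t
  rw [← mul_sum, sum_add_distrib, ← mul_sum] at hsum
  have hbefore' : (∑ t ∈ times, #{u ∈ H.U | u.2 + 1 = t} : ℝ) + 1 ≤ #H.U := by
    exact_mod_cast hbefore
  rw [hslices]
  push_cast
  linarith

end HistoryGraph

end Paper

open Paper in
theorem historyGraph_vertex_expansion_inequality_CP_general
    {V : Type*} [DecidableEq V]
    (G : SimpleGraph V) [DecidableRel G.Adj] [∀ v, Fintype (G.neighborSet v)]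
    (j : ℕ) (o : V) (T : ℕ) (H : HistoryGraph G j o T false) :
    (vertexExpansion G - j) * H.U.card + 1 ≤ (vertexExpansion G - j + 1) * H.Ustar.card := by
  have h := H.vertexExpansion_mul_card_sdiff_le
  rw [Finset.card_sdiff_of_subset H.ustar_subset,
    Nat.cast_sub (Finset.card_le_card H.ustar_subset)] at h
  linear_combination h

open Paper in
/-- the vertex-expansion history-graph inequality (Lemma 4.6) for the
`j`-threshold Consensus Process. -/
theorem historyGraph_vertex_expansion_inequality_CP
    {V : Type*} [Infinite V] [DecidableEq V]
    (G : SimpleGraph V) [DecidableRel G.Adj] [∀ v, Fintype (G.neighborSet v)]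
    (hconn : G.Connected)
    (Δ : ℕ) (hΔ : IsLUB (Set.range fun x => G.degree x) Δ)
    (δ : ℕ) (hδ : IsGLB (Set.range fun x => G.degree x) δ)
    (j : ℕ) (hj1 : 1 ≤ j) (hjδ : j ≤ δ)
    (o : V) (T : ℕ) (H : HistoryGraph G j o T false) :
    (vertexExpansion G - j) * H.U.card + 1 ≤ (vertexExpansion G - j + 1) * H.Ustar.card :=
  historyGraph_vertex_expansion_inequality_CP_general G j o T H
end
end

section
/- For every (x,t) ∈ V×ℕ and every integer n ≥ 1, the number of history graphs for Ξ (where Ξ is either the j-threshold Consensus Process or the j-neighbour Bootstrap Percolation, over all possible roots (o,T) ∈ V×ℕ) whose vertex set 𝒰 has cardinality n and contains (x,t) is at most (1 + 2n)·(1 + Δ)^n·4^n·(1 + 2^Δ)^n. -/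
open Classical
noncomputable section

/-!
Explore a history graph from `(x, t)` breadth-first, ignoring the orientation of its edges,
and list its vertices in the order of discovery. The out-neighbours of a vertex `u` are fixed by
whether `u ∈ 𝒰*` and by its set of oblique out-neighbours, a subset of the at most `Δ`
neighbours of `u.1`: a token with at most `1 + 2^Δ` values. The in-neighbours of `u` lie among
the at most `1 + Δ` vertices `(w, u.2 + 1)` with `w = u.1` or `w ∼ u.1`; the labels of those
discovered at each step form a word over `Option (Fin (Δ + 1))` with `n` separators `none` and at
most `n - 1` letters, stored as its `2n - 1` some/none bits together with its letters. These data
and the position of the root in the discovery order determine the history graph, so there are at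
most `(n + 1) (1 + 2^Δ)^n 2^(2n-1) (1 + Δ)^(n-1)` history graphs.
-/

namespace Finset

variable {α : Type*}

/-- Junk value `∅` when `s` has more than `m` elements. -/
def subsetCode (m : ℕ) (s t : Finset α) : Finset (Fin m) :=
  if h : Nonempty (s ↪ Fin m) then (t.subtype (· ∈ s)).map h.some else ∅

theorem card_subsetCode_le (m : ℕ) (s t : Finset α) : (subsetCode m s t).card ≤ t.card := by
  unfold subsetCode
  split
  · rw [card_map, card_subtype]
    exact card_filter_le _ _
  · exact (card_empty).trans_le (Nat.zero_le _)

theorem subsetCode_injOn {m : ℕ} {s : Finset α} (hs : s.card ≤ m) :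
    Set.InjOn (subsetCode m s) {t | t ⊆ s} := by
  have h : Nonempty (s ↪ Fin m) :=
    Function.Embedding.nonempty_of_card_le (by simpa using hs)
  intro t ht t' ht' heq
  simp only [subsetCode, dif_pos h, map_inj] at heq
  rw [← subtype_map_of_mem ht, ← subtype_map_of_mem ht', heq]

end Finset

namespace List

variable {α : Type*}

def fillSome : List Bool → (ℕ → α) → List (Option α)
  | [], _ => []
  | false :: p, r => none :: fillSome p r
  | true :: p, r => some (r 0) :: fillSome p fun i => r (i + 1)

theorem fillSome_map_isSome (l : List (Option α)) (r : ℕ → α)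
    (hr : ∀ i (hi : i < l.reduceOption.length), r i = l.reduceOption[i]) :
    fillSome (l.map Option.isSome) r = l := by
  induction l generalizing r with
  | nil => rfl
  | cons a l ih =>
    cases a with
    | none =>
      rw [reduceOption_cons_of_none] at hr
      simp only [map_cons, Option.isSome_none, fillSome, ih r hr]
    | some a =>
      rw [reduceOption_cons_of_some] at hr
      simp only [map_cons, Option.isSome_some, fillSome]
      rw [hr 0 (by simp), ih _ fun i hi => hr (i + 1) (by simpa using hi)]
      rfl

def wordCode (L K : ℕ) (d : α) (W : List (Option α)) : (Fin L → Bool) × (Fin K → α) :=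
  (fun i => (W.getD i none).isSome, fun i => W.reduceOption.getD i d)

def wordDecode {L K : ℕ} (d : α) (c : (Fin L → Bool) × (Fin K → α)) : List (Option α) :=
  fillSome (ofFn c.1) fun i => if h : i < K then c.2 ⟨i, h⟩ else d

theorem wordDecode_wordCode {L K : ℕ} (d : α) {W : List (Option α)} (hL : W.length ≤ L)
    (hK : W.reduceOption.length ≤ K) : wordDecode d (wordCode L K d W) = W.rightpad L none := by
  have hred : (W.rightpad L none).reduceOption = W.reduceOption := by
    simp [rightpad, reduceOption_append, reduceOption_replicate_none]
  have hbits : ofFn (wordCode L K d W).1 = (W.rightpad L none).map Option.isSome := by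
    apply ext_getElem (by simp [hL])
    intro i h₁ h₂
    simp only [wordCode, List.getElem_ofFn, getElem_map, rightpad]
    rcases lt_or_ge i W.length with hi | hi
    · rw [getElem_append_left hi, getD_eq_getElem _ _ hi]
    · rw [getElem_append_right hi, getD_eq_default _ _ hi]
      simp
  rw [wordDecode, hbits, fillSome_map_isSome]
  intro i hi
  simp only [hred] at hi ⊢
  exact (dif_pos (hi.trans_le hK)).trans (getD_eq_getElem _ _ hi)

theorem map_some_append_none_inj {l l' : List α} {A A' : List (Option α)}
    (h : l.map some ++ none :: A = l'.map some ++ none :: A') : l = l' ∧ A = A' := by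
  induction l generalizing l' with
  | nil => cases l' <;> simp_all
  | cons a l ih =>
    cases l' with
    | nil => simp at h
    | cons a' l' =>
      simp only [map_cons, cons_append, cons.injEq, Option.some.injEq] at h
      exact ⟨by rw [h.1, (ih h.2).1], (ih h.2).2⟩

def segmentWord (ls : List (List α)) : List (Option α) :=
  (ls.map fun l => l.map some ++ [none]).flatten

theorem segmentWord_append_inj {ls ls' : List (List α)} {R R' : List (Option α)}
    (hlen : ls.length = ls'.length) (h : segmentWord ls ++ R = segmentWord ls' ++ R') :
    ls = ls' := by
  induction ls generalizing ls' with
  | nil => exact (length_eq_zero_iff.1 hlen.symm).symm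
  | cons l ls ih =>
    cases ls' with
    | nil => simp at hlen
    | cons l' ls' =>
      simp only [segmentWord, map_cons, flatten_cons, append_assoc, singleton_append] at h
      obtain ⟨rfl, hrest⟩ := map_some_append_none_inj h
      rw [ih (by simpa using hlen) hrest]

theorem length_segmentWord (ls : List (List α)) :
    (segmentWord ls).length = ls.length + (ls.map length).sum := by
  induction ls with
  | nil => rfl
  | cons l ls ih => simp [segmentWord] at ih ⊢; omega

theorem reduceOption_segmentWord (ls : List (List α)) :
    (segmentWord ls).reduceOption = ls.flatten := by
  induction ls with
  | nil => rfl
  | cons l ls ih => simp_all [segmentWord, reduceOption, filterMap_map]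

end List


namespace Exploration

variable {β : Type*} [DecidableEq β]

def outNbrs (F : Finset (β × β)) (u : β) : Finset β := (F.filter (·.1 = u)).image Prod.snd

def inNbrs (F : Finset (β × β)) (u : β) : Finset β := (F.filter (·.2 = u)).image Prod.fst

@[simp] theorem mem_outNbrs {F : Finset (β × β)} {u v : β} : v ∈ outNbrs F u ↔ (u, v) ∈ F := by
  simp [outNbrs]

@[simp] theorem mem_inNbrs {F : Finset (β × β)} {u v : β} : v ∈ inNbrs F u ↔ (v, u) ∈ F := by
  simp [inNbrs]

def appendNew (L : List β) (s : Finset β) : List β := L ++ (s \ L.toFinset).toList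

theorem mem_appendNew {L : List β} {s : Finset β} {v : β} : v ∈ appendNew L s ↔ v ∈ L ∨ v ∈ s := by
  by_cases hv : v ∈ L <;> simp [appendNew, hv]

theorem nodup_appendNew {L : List β} (hL : L.Nodup) (s : Finset β) : (appendNew L s).Nodup :=
  hL.append (Finset.nodup_toList _) fun a ha hb => by simp_all

theorem length_appendNew (L : List β) (s : Finset β) :
    (appendNew L s).length = L.length + (s \ L.toFinset).card := by
  simp [appendNew]

variable (F : Finset (β × β)) (x : β)

def explore : ℕ → List β
  | 0 => [x]
  | k + 1 =>
    let L := explore k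
    if k < L.length then appendNew (appendNew L (outNbrs F (L.getD k x))) (inNbrs F (L.getD k x))
    else L

def newIn (k : ℕ) : Finset β :=
  if k < (explore F x k).length then
    inNbrs F ((explore F x k).getD k x) \
      (appendNew (explore F x k) (outNbrs F ((explore F x k).getD k x))).toFinset
  else ∅

variable {F x}

theorem explore_succ_of_lt {k : ℕ} (hk : k < (explore F x k).length) :
    explore F x (k + 1) =
      appendNew (explore F x k) (outNbrs F ((explore F x k).getD k x)) ++ (newIn F x k).toList := by
  rw [explore, if_pos hk, newIn, if_pos hk]
  rfl

theorem explore_succ_of_length_le {k : ℕ} (hk : (explore F x k).length ≤ k) :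
    explore F x (k + 1) = explore F x k := by
  rw [explore, if_neg hk.not_gt]

theorem explore_prefix_succ (k : ℕ) : explore F x k <+: explore F x (k + 1) := by
  rcases lt_or_ge k (explore F x k).length with hk | hk
  · rw [explore_succ_of_lt hk, appendNew, List.append_assoc]
    exact List.prefix_append _ _
  · rw [explore_succ_of_length_le hk]

theorem explore_prefix {k m : ℕ} (h : k ≤ m) : explore F x k <+: explore F x m := by
  induction m, h using Nat.le_induction with
  | base => exact List.prefix_rfl
  | succ m _ ih => exact ih.trans (explore_prefix_succ m)

theorem explore_eq_of_length_le {k m : ℕ} (hk : (explore F x k).length ≤ k) (h : k ≤ m) :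
    explore F x m = explore F x k := by
  induction m, h using Nat.le_induction with
  | base => rfl
  | succ m hkm ih => rw [explore_succ_of_length_le (by rw [ih]; omega), ih]

theorem getD_explore_of_lt {k m : ℕ} (hk : k < (explore F x k).length) (h : k ≤ m) :
    (explore F x m).getD k x = (explore F x k).getD k x := by
  have hp := explore_prefix (F := F) (x := x) h
  rw [List.getD_eq_getElem _ _ hk, List.getD_eq_getElem _ _ (hk.trans_le hp.length_le),
    hp.getElem hk]

theorem nodup_explore (k : ℕ) : (explore F x k).Nodup := by
  induction k with
  | zero => exact List.nodup_singleton x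
  | succ k ih =>
    rw [explore]
    split
    · exact nodup_appendNew (nodup_appendNew ih _) _
    · exact ih

theorem mem_of_mem_explore {U : Finset β} (hx : x ∈ U) (hF : ∀ e ∈ F, e.1 ∈ U ∧ e.2 ∈ U) :
    ∀ k, ∀ v ∈ explore F x k, v ∈ U := by
  intro k
  induction k with
  | zero => simpa [explore] using hx
  | succ k ih =>
    intro v hv
    rw [explore] at hv
    split at hv
    · simp only [mem_appendNew, mem_outNbrs, mem_inNbrs] at hv
      rcases hv with (hv | hv) | hv
      exacts [ih v hv, (hF _ hv).2, (hF _ hv).1]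
    · exact ih v hv

theorem mem_explore_of_adj {k : ℕ} (hk : (explore F x k).length ≤ k) {v w : β}
    (hv : v ∈ explore F x k) (hvw : (v, w) ∈ F ∨ (w, v) ∈ F) : w ∈ explore F x k := by
  obtain ⟨i, hi, rfl⟩ := List.getElem_of_mem hv
  have hik : i + 1 ≤ k := by omega
  have hii : i < (explore F x i).length := by
    by_contra hii
    rw [explore_eq_of_length_le (not_lt.1 hii) (by omega : i ≤ k)] at hi
    omega
  have hvi : (explore F x k)[i] = (explore F x i).getD i x := by
    rw [← List.getD_eq_getElem _ x hi, getD_explore_of_lt hii (by omega)]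
  apply (explore_prefix hik).subset
  rw [explore, if_pos hii]
  rw [hvi] at hvw
  simp only [mem_appendNew, mem_outNbrs, mem_inNbrs]
  tauto

theorem mem_explore_of_reach {k : ℕ} (hk : (explore F x k).length ≤ k) {w : β}
    (h : Relation.ReflTransGen (fun a b => (a, b) ∈ F ∨ (b, a) ∈ F) x w) : w ∈ explore F x k := by
  induction h with
  | refl => exact (explore_prefix (Nat.zero_le k)).subset (by simp [explore])
  | tail _ hvw ih => exact mem_explore_of_adj hk ih hvw

theorem newIn_subset_inNbrs (k : ℕ) : newIn F x k ⊆ inNbrs F ((explore F x k).getD k x) := by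
  rw [newIn]
  split
  · exact Finset.sdiff_subset
  · exact Finset.empty_subset _

theorem sum_card_newIn_lt (m : ℕ) :
    ((List.range m).map fun k => (newIn F x k).card).sum < (explore F x m).length := by
  induction m with
  | zero => simp [explore]
  | succ k ih =>
    rw [List.range_succ, List.map_append, List.sum_append, List.map_singleton, List.sum_singleton]
    rcases lt_or_ge k (explore F x k).length with hk | hk
    · rw [explore_succ_of_lt hk, List.length_append, length_appendNew, Finset.length_toList]
      omega
    · rw [newIn, if_neg hk.not_gt, explore_succ_of_length_le hk]
      simpa using ih

theorem length_explore_le_card {U : Finset β} (hx : x ∈ U) (hF : ∀ e ∈ F, e.1 ∈ U ∧ e.2 ∈ U)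
    (k : ℕ) : (explore F x k).length ≤ U.card := by
  rw [← List.toFinset_card_of_nodup (nodup_explore k)]
  exact Finset.card_le_card fun v hv => mem_of_mem_explore hx hF k v (List.mem_toFinset.1 hv)

theorem toFinset_explore_card {U : Finset β} (hx : x ∈ U) (hF : ∀ e ∈ F, e.1 ∈ U ∧ e.2 ∈ U)
    (hconn : ∀ w ∈ U, Relation.ReflTransGen (fun a b => (a, b) ∈ F ∨ (b, a) ∈ F) x w) :
    (explore F x U.card).toFinset = U :=
  Finset.Subset.antisymm
    (fun v hv => mem_of_mem_explore hx hF _ v (List.mem_toFinset.1 hv))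
    fun w hw => List.mem_toFinset.2 <|
      mem_explore_of_reach (length_explore_le_card hx hF _) (hconn w hw)

theorem explore_congr {F' : Finset (β × β)} {n : ℕ}
    (h : ∀ k < n, explore F x k = explore F' x k → k < (explore F x k).length →
      outNbrs F ((explore F x k).getD k x) = outNbrs F' ((explore F x k).getD k x) ∧
        newIn F x k = newIn F' x k) :
    explore F x n = explore F' x n := by
  induction n with
  | zero => rfl
  | succ k ih =>
    have hk := ih fun i hi => h i (by omega)
    rcases lt_or_ge k (explore F x k).length with hlt | hle
    · obtain ⟨hout, hin⟩ := h k (by omega) hk hlt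
      rw [explore_succ_of_lt hlt, explore_succ_of_lt (hk ▸ hlt), ← hk, hout, hin]
    · rw [explore_succ_of_length_le hle, explore_succ_of_length_le (hk ▸ hle), hk]

end Exploration

namespace Paper

open Exploration

attribute [ext] HistoryGraph

def inCandidates {V : Type*} (G : SimpleGraph V) [∀ v, Fintype (G.neighborSet v)] (u : V × ℕ) :
    Finset (V × ℕ) :=
  (insert u.1 (G.neighborFinset u.1)).image (·, u.2 + 1)

theorem card_inCandidates_le {V : Type*} {G : SimpleGraph V} [∀ v, Fintype (G.neighborSet v)]
    {Δ : ℕ} {u : V × ℕ} (hdeg : G.degree u.1 ≤ Δ) : (inCandidates G u).card ≤ Δ + 1 :=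
  Finset.card_image_le.trans <| (Finset.card_insert_le _ _).trans <| by
    rw [SimpleGraph.card_neighborFinset_eq_degree]; omega

variable {V : Type*} {G : SimpleGraph V} [DecidableRel G.Adj] [∀ v, Fintype (G.neighborSet v)]
  {j : ℕ} {bp : Bool} {o o' : V} {T T' : ℕ}

namespace HistoryGraph

theorem edge_mem (H : HistoryGraph G j o T bp) : ∀ e ∈ H.F, e.1 ∈ H.U ∧ e.2 ∈ H.U :=
  fun e he => ⟨H.edge_mem_fst e he, H.edge_mem_snd e he⟩

theorem mem_F_iff (H : HistoryGraph G j o T bp) (e : (V × ℕ) × (V × ℕ)) :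
    e ∈ H.F ↔ e.1 ∈ H.U ∧ e.2 ∈ outNbrs H.F e.1 := by
  rw [mem_outNbrs]
  exact ⟨fun he => ⟨H.edge_mem_fst e he, he⟩, And.right⟩

theorem toFinset_explore {x : V} {t n : ℕ} (H : HistoryGraph G j o T bp) (hU : H.U.card = n)
    (hx : (x, t) ∈ H.U) : (explore H.F (x, t) n).toFinset = H.U :=
  hU ▸ toFinset_explore_card hx H.edge_mem fun w hw => H.conn _ hx w hw

theorem inNbrs_subset (H : HistoryGraph G j o T bp) (u : V × ℕ) :
    inNbrs H.F u ⊆ inCandidates G u := by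
  intro v hv
  rw [mem_inNbrs] at hv
  refine Finset.mem_image.2 ⟨v.1, ?_, Prod.ext rfl (H.edge_time _ hv).symm⟩
  rcases H.edge_space _ hv with h | h
  · exact Finset.mem_insert.2 (Or.inl h)
  · exact Finset.mem_insert_of_mem ((G.mem_neighborFinset _ _).2 h.symm)

def obliqueNbrs (H : HistoryGraph G j o T bp) (u : V × ℕ) : Finset V :=
  (G.neighborFinset u.1).filter fun w => (u, (w, u.2 - 1)) ∈ H.F

theorem bp_eq_true_of_straight_mem (H : HistoryGraph G j o T bp) {u v : V × ℕ} (hu : u ∈ H.U)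
    (hv : (u, v) ∈ H.F) (hsp : u.1 = v.1) : bp = true := by
  have hs : u ∉ H.Ustar := fun hs => H.star_no_out u hs _ hv rfl
  have hpos : 0 < (H.F.filter fun e => e.1 = u ∧ e.2.1 = u.1).card :=
    Finset.card_pos.2 ⟨_, Finset.mem_filter.2 ⟨hv, rfl, hsp.symm⟩⟩
  rw [H.straight_count u hu hs] at hpos
  cases bp <;> simp_all

theorem straight_mem (H : HistoryGraph G j o T true) {u : V × ℕ} (hu : u ∈ H.U)
    (hs : u ∉ H.Ustar) : (u, (u.1, u.2 - 1)) ∈ H.F := by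
  obtain ⟨e, he⟩ := Finset.card_eq_one.1 (H.straight_count u hu hs)
  obtain ⟨heF, he1, he2⟩ := Finset.mem_filter.1 (he ▸ Finset.mem_singleton_self e)
  have ht := he1 ▸ H.edge_time e heF
  rwa [show e = (u, (u.1, u.2 - 1)) from Prod.ext he1 (Prod.ext he2 (by dsimp only; omega))]
    at heF

theorem mem_outNbrs_iff (H : HistoryGraph G j o T bp) {u v : V × ℕ} (hu : u ∈ H.U) :
    v ∈ outNbrs H.F u ↔
      u ∉ H.Ustar ∧ v.2 + 1 = u.2 ∧ ((bp = true ∧ v.1 = u.1) ∨ v.1 ∈ H.obliqueNbrs u) := by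
  rw [mem_outNbrs]
  constructor
  · intro hv
    have ht := H.edge_time _ hv
    have hv' : (v.1, u.2 - 1) = v := Prod.ext rfl (by simp at ht; omega)
    refine ⟨fun hs => H.star_no_out u hs _ hv rfl, ht.symm, ?_⟩
    rcases H.edge_space _ hv with hsp | hsp
    · exact Or.inl ⟨H.bp_eq_true_of_straight_mem hu hv hsp, hsp.symm⟩
    · exact Or.inr (by simpa [obliqueNbrs, hv'] using And.intro hsp hv)
  · rintro ⟨hs, ht, ⟨rfl, hsp⟩ | hob⟩ <;> have hv : (v.1, u.2 - 1) = v := Prod.ext rfl (by omega)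
    · rw [← hv, hsp]
      exact H.straight_mem hu hs
    · simpa [obliqueNbrs, hv] using (Finset.mem_filter.1 hob).2

def token (Δ : ℕ) (H : HistoryGraph G j o T bp) (u : V × ℕ) : Option (Finset (Fin Δ)) :=
  if u ∈ H.Ustar then none else some ((G.neighborFinset u.1).subsetCode Δ (H.obliqueNbrs u))

theorem token_eq_none_iff {Δ : ℕ} (H : HistoryGraph G j o T bp) (u : V × ℕ) :
    H.token Δ u = none ↔ u ∈ H.Ustar := by
  unfold token
  split <;> simp_all

theorem outNbrs_eq_of_token_eq {Δ : ℕ} {H : HistoryGraph G j o T bp}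
    {H' : HistoryGraph G j o' T' bp} {u : V × ℕ} (hdeg : G.degree u.1 ≤ Δ) (hu : u ∈ H.U)
    (hu' : u ∈ H'.U) (h : H.token Δ u = H'.token Δ u) : outNbrs H.F u = outNbrs H'.F u := by
  have hs : u ∈ H.Ustar ↔ u ∈ H'.Ustar := by
    rw [← token_eq_none_iff H, ← token_eq_none_iff H', h]
  ext v
  rw [H.mem_outNbrs_iff hu, H'.mem_outNbrs_iff hu', ← hs]
  by_cases hsu : u ∈ H.Ustar
  · simp [hsu]
  · have hob : H.obliqueNbrs u = H'.obliqueNbrs u := by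
      unfold token at h
      rw [if_neg hsu, if_neg (hs.not.1 hsu), Option.some.injEq] at h
      exact Finset.subsetCode_injOn (by rwa [SimpleGraph.card_neighborFinset_eq_degree])
        (Finset.filter_subset _ _) (Finset.filter_subset _ _) h
    rw [hob]

theorem Ustar_eq_of_token_eq {Δ : ℕ} {H : HistoryGraph G j o T bp}
    {H' : HistoryGraph G j o' T' bp} (hUU : H.U = H'.U)
    (htok : ∀ u ∈ H.U, H.token Δ u = H'.token Δ u) : H.Ustar = H'.Ustar := by
  ext u
  by_cases hu : u ∈ H.U
  · rw [← token_eq_none_iff H (Δ := Δ), htok u hu, token_eq_none_iff]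
  · exact iff_of_false (fun h => hu (H.ustar_subset h)) (fun h => hu (hUU ▸ H'.ustar_subset h))

theorem F_eq_of_token_eq {Δ : ℕ} {H : HistoryGraph G j o T bp} {H' : HistoryGraph G j o' T' bp}
    (hdeg : ∀ y, G.degree y ≤ Δ) (hUU : H.U = H'.U)
    (htok : ∀ u ∈ H.U, H.token Δ u = H'.token Δ u) : H.F = H'.F := by
  ext e
  rw [H.mem_F_iff, H'.mem_F_iff, ← hUU]
  exact and_congr_right fun he => by
    rw [outNbrs_eq_of_token_eq (hdeg _) he (hUU ▸ he) (htok _ he)]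

end HistoryGraph

section Encoding

variable (Δ : ℕ) (x : V) (t n : ℕ)

def labelList (H : HistoryGraph G j o T bp) (k : ℕ) : List (Fin (Δ + 1)) :=
  ((inCandidates G ((explore H.F (x, t) k).getD k (x, t))).subsetCode (Δ + 1)
    (newIn H.F (x, t) k)).sort (· ≤ ·)

def labelWord (H : HistoryGraph G j o T bp) : List (Option (Fin (Δ + 1))) :=
  List.segmentWord ((List.range n).map (labelList Δ x t H))

abbrev Code : Type :=
  Fin (n + 1) × (Fin n → Option (Finset (Fin Δ))) × (Fin (2 * n - 1) → Bool) ×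
    (Fin (n - 1) → Fin (Δ + 1))

def encode (H : HistoryGraph G j o T bp) : Code Δ n :=
  let L := explore H.F (x, t) n
  -- the root has index `< n` in `L`, so `Fin.ofNat` does not wrap around
  (Fin.ofNat (n + 1) (L.idxOf (o, T)), fun i => H.token Δ (L.getD i (x, t)),
    List.wordCode (2 * n - 1) (n - 1) 0 (labelWord Δ x t n H))

theorem card_code_le :
    Fintype.card (Code Δ n) ≤ (1 + 2 * n) * (1 + Δ) ^ n * 4 ^ n * (1 + 2 ^ Δ) ^ n := by
  simp only [Fintype.card_prod, Fintype.card_fun, Fintype.card_option, Fintype.card_finset,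
    Fintype.card_fin, Fintype.card_bool]
  have h4 : 2 ^ (2 * n - 1) ≤ 4 ^ n :=
    (Nat.pow_le_pow_right two_pos (Nat.sub_le _ 1)).trans_eq (by rw [pow_mul]; norm_num)
  have hΔ : (Δ + 1) ^ (n - 1) ≤ (1 + Δ) ^ n :=
    (Nat.pow_le_pow_right (Nat.succ_pos Δ) (Nat.sub_le n 1)).trans_eq (by rw [add_comm])
  calc (n + 1) * ((2 ^ Δ + 1) ^ n * (2 ^ (2 * n - 1) * (Δ + 1) ^ (n - 1)))
      ≤ (1 + 2 * n) * ((1 + 2 ^ Δ) ^ n * (4 ^ n * (1 + Δ) ^ n)) := by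
        rw [add_comm (2 ^ Δ)]
        exact Nat.mul_le_mul (by omega) (Nat.mul_le_mul le_rfl (Nat.mul_le_mul h4 hΔ))
    _ = _ := by ring

variable {Δ x t n}

theorem sum_length_labelList_lt (H : HistoryGraph G j o T bp) (hU : H.U.card = n)
    (hx : (x, t) ∈ H.U) : ((List.range n).map fun k => (labelList Δ x t H k).length).sum < n :=
  calc ((List.range n).map fun k => (labelList Δ x t H k).length).sum
      ≤ ((List.range n).map fun k => (newIn H.F (x, t) k).card).sum :=
        List.sum_le_sum fun k _ => by
          rw [labelList, Finset.length_sort]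
          exact Finset.card_subsetCode_le _ _ _
    _ < (explore H.F (x, t) n).length := sum_card_newIn_lt n
    _ ≤ n := hU ▸ length_explore_le_card hx H.edge_mem n

theorem length_labelWord_le (H : HistoryGraph G j o T bp) (hU : H.U.card = n)
    (hx : (x, t) ∈ H.U) :
    (labelWord Δ x t n H).length ≤ 2 * n - 1 ∧ (labelWord Δ x t n H).reduceOption.length ≤ n - 1 := by
  have := sum_length_labelList_lt (Δ := Δ) H hU hx
  simp only [labelWord, List.length_segmentWord, List.reduceOption_segmentWord,
    List.length_flatten, List.length_map, List.length_range, List.map_map, Function.comp_def]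
  omega

theorem labelList_eq_of_encode_eq {H : HistoryGraph G j o T bp} {H' : HistoryGraph G j o' T' bp}
    (hU : H.U.card = n) (hx : (x, t) ∈ H.U) (hU' : H'.U.card = n) (hx' : (x, t) ∈ H'.U)
    (h : encode Δ x t n H = encode Δ x t n H') {k : ℕ} (hk : k < n) :
    labelList Δ x t H k = labelList Δ x t H' k := by
  obtain ⟨hlen, hred⟩ := length_labelWord_le (Δ := Δ) H hU hx
  obtain ⟨hlen', hred'⟩ := length_labelWord_le (Δ := Δ) H' hU' hx'
  have hpad : (labelWord Δ x t n H).rightpad (2 * n - 1) none =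
      (labelWord Δ x t n H').rightpad (2 * n - 1) none := by
    rw [← List.wordDecode_wordCode 0 hlen hred, ← List.wordDecode_wordCode 0 hlen' hred']
    exact congrArg (fun c : Code Δ n => List.wordDecode 0 c.2.2) h
  exact List.map_inj_left.1 (List.segmentWord_append_inj (by simp) hpad) k (List.mem_range.2 hk)

theorem newIn_eq_of_labelList_eq (hdeg : ∀ y, G.degree y ≤ Δ) {H : HistoryGraph G j o T bp}
    {H' : HistoryGraph G j o' T' bp} {k : ℕ} (hL : explore H.F (x, t) k = explore H'.F (x, t) k)
    (h : labelList Δ x t H k = labelList Δ x t H' k) :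
    newIn H.F (x, t) k = newIn H'.F (x, t) k := by
  have hsub : ∀ {o : V} {T : ℕ} (H : HistoryGraph G j o T bp),
      newIn H.F (x, t) k ⊆ inCandidates G ((explore H.F (x, t) k).getD k (x, t)) :=
    fun H => (newIn_subset_inNbrs k).trans (H.inNbrs_subset _)
  have hsub' := hsub H'
  have hcode := congrArg List.toFinset h
  simp only [labelList, Finset.sort_toFinset, ← hL] at hcode hsub'
  exact Finset.subsetCode_injOn (card_inCandidates_le (hdeg _)) (hsub H) hsub' hcode

theorem explore_eq_of_encode_eq (hdeg : ∀ y, G.degree y ≤ Δ) {H : HistoryGraph G j o T bp}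
    {H' : HistoryGraph G j o' T' bp} (hU : H.U.card = n) (hx : (x, t) ∈ H.U)
    (hU' : H'.U.card = n) (hx' : (x, t) ∈ H'.U) (h : encode Δ x t n H = encode Δ x t n H') :
    explore H.F (x, t) n = explore H'.F (x, t) n := by
  refine explore_congr fun k hk hL hlt => ⟨?_, newIn_eq_of_labelList_eq hdeg hL
    (labelList_eq_of_encode_eq hU hx hU' hx' h hk)⟩
  have hlt' : k < (explore H'.F (x, t) k).length := hL ▸ hlt
  have hmem : (explore H.F (x, t) k).getD k (x, t) ∈ explore H.F (x, t) k := by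
    rw [List.getD_eq_getElem _ _ hlt]
    exact List.getElem_mem hlt
  have htok := congrFun (congrArg (·.2.1) h) ⟨k, hk⟩
  simp only [encode, getD_explore_of_lt hlt hk.le, getD_explore_of_lt hlt' hk.le, ← hL] at htok
  exact HistoryGraph.outNbrs_eq_of_token_eq (hdeg _) (mem_of_mem_explore hx H.edge_mem k _ hmem)
    (mem_of_mem_explore hx' H'.edge_mem k _ (hL ▸ hmem)) htok

theorem token_eq_of_encode_eq (hdeg : ∀ y, G.degree y ≤ Δ) {H : HistoryGraph G j o T bp}
    {H' : HistoryGraph G j o' T' bp} (hU : H.U.card = n) (hx : (x, t) ∈ H.U)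
    (hU' : H'.U.card = n) (hx' : (x, t) ∈ H'.U) (h : encode Δ x t n H = encode Δ x t n H') :
    ∀ u ∈ H.U, H.token Δ u = H'.token Δ u := by
  have hL := explore_eq_of_encode_eq hdeg hU hx hU' hx' h
  have hlen : (explore H.F (x, t) n).length = n := by
    rw [← List.toFinset_card_of_nodup (nodup_explore n), H.toFinset_explore hU hx, hU]
  intro u hu
  rw [← H.toFinset_explore hU hx, List.mem_toFinset] at hu
  obtain ⟨i, hi, rfl⟩ := List.getElem_of_mem hu
  have htok := congrFun (congrArg (·.2.1) h) ⟨i, hlen ▸ hi⟩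
  simp only [encode] at htok
  rwa [← hL, List.getD_eq_getElem _ _ hi] at htok

theorem root_eq_of_encode_eq (hdeg : ∀ y, G.degree y ≤ Δ) {H : HistoryGraph G j o T bp}
    {H' : HistoryGraph G j o' T' bp} (hU : H.U.card = n) (hx : (x, t) ∈ H.U)
    (hU' : H'.U.card = n) (hx' : (x, t) ∈ H'.U) (h : encode Δ x t n H = encode Δ x t n H') :
    (o, T) = (o', T') := by
  have hL := explore_eq_of_encode_eq hdeg hU hx hU' hx' h
  have hlen : (explore H.F (x, t) n).length = n := by
    rw [← List.toFinset_card_of_nodup (nodup_explore n), H.toFinset_explore hU hx, hU]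
  have hmem : (o, T) ∈ explore H.F (x, t) n :=
    List.mem_toFinset.1 (H.toFinset_explore hU hx ▸ H.root_mem)
  have hmem' : (o', T') ∈ explore H.F (x, t) n :=
    List.mem_toFinset.1 (hL ▸ H'.toFinset_explore hU' hx' ▸ H'.root_mem)
  have hidx := congrArg (fun c => (c.1 : ℕ)) h
  simp only [encode, Fin.val_ofNat, ← hL] at hidx
  rw [Nat.mod_eq_of_lt (by have := List.idxOf_lt_length_iff.2 hmem; omega),
    Nat.mod_eq_of_lt (by have := List.idxOf_lt_length_iff.2 hmem'; omega)] at hidx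
  exact (List.idxOf_inj hmem).1 hidx

theorem encode_injOn (hdeg : ∀ y, G.degree y ≤ Δ) :
    Set.InjOn (fun H : (oT : V × ℕ) × HistoryGraph G j oT.1 oT.2 bp => encode Δ x t n H.2)
      {H | H.2.U.card = n ∧ (x, t) ∈ H.2.U} := by
  rintro ⟨⟨o, T⟩, H⟩ ⟨hU, hx⟩ ⟨⟨o', T'⟩, H'⟩ ⟨hU', hx'⟩ h
  dsimp only at h hU hx hU' hx'
  obtain ⟨rfl, rfl⟩ := Prod.mk.inj (root_eq_of_encode_eq hdeg hU hx hU' hx' h)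
  have hUU : H.U = H'.U := by
    rw [← H.toFinset_explore hU hx, explore_eq_of_encode_eq hdeg hU hx hU' hx' h,
      H'.toFinset_explore hU' hx']
  have htok := token_eq_of_encode_eq hdeg hU hx hU' hx' h
  rw [HistoryGraph.ext hUU (H.F_eq_of_token_eq hdeg hUU htok) (H.Ustar_eq_of_token_eq hUU htok)]

end Encoding

end Paper

open Paper in
theorem historyGraph_count_containing_vertex_general
    {V : Type*}
    (G : SimpleGraph V) [DecidableRel G.Adj] [∀ v, Fintype (G.neighborSet v)]
    (Δ : ℕ) (hΔ : IsLUB (Set.range fun x => G.degree x) Δ)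
    (j : ℕ)
    (x : V) (t : ℕ) (bp : Bool) (n : ℕ) :
    {H : (oT : V × ℕ) × HistoryGraph G j oT.1 oT.2 bp |
        H.2.U.card = n ∧ (x, t) ∈ H.2.U}.Finite ∧
      {H : (oT : V × ℕ) × HistoryGraph G j oT.1 oT.2 bp |
        H.2.U.card = n ∧ (x, t) ∈ H.2.U}.ncard ≤
        (1 + 2 * n) * (1 + Δ) ^ n * 4 ^ n * (1 + 2 ^ Δ) ^ n := by
  have hinj := encode_injOn (bp := bp) (j := j) (x := x) (t := t) (n := n)
    fun y => hΔ.1 ⟨y, rfl⟩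
  refine ⟨Set.Finite.of_injOn (Set.mapsTo_univ _ _) hinj Set.finite_univ, ?_⟩
  calc _ ≤ (Set.univ : Set (Code Δ n)).ncard :=
        Set.ncard_le_ncard_of_injOn _ (fun _ _ => trivial) hinj
    _ = Fintype.card (Code Δ n) := by rw [Set.ncard_univ, Nat.card_eq_fintype_card]
    _ ≤ _ := card_code_le Δ n

open Paper in
/-- the number of history graphs (for either process, selected by `bp`, over all
possible roots `(o, T)`) whose vertex set has cardinality `n` and contains a fixed `(x, t)` is
at most `(1 + 2n) · (1 + Δ)^n · 4^n · (1 + 2^Δ)^n`. -/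
theorem historyGraph_count_containing_vertex
    {V : Type*} [Infinite V]
    (G : SimpleGraph V) [DecidableRel G.Adj] [∀ v, Fintype (G.neighborSet v)]
    (hconn : G.Connected)
    (Δ : ℕ) (hΔ : IsLUB (Set.range fun x => G.degree x) Δ)
    (δ : ℕ) (hδ : IsGLB (Set.range fun x => G.degree x) δ)
    (j : ℕ) (hj1 : 1 ≤ j) (hjδ : j ≤ δ)
    (x : V) (t : ℕ) (bp : Bool) (n : ℕ) (hn : 1 ≤ n) :
    {H : (oT : V × ℕ) × HistoryGraph G j oT.1 oT.2 bp |
        H.2.U.card = n ∧ (x, t) ∈ H.2.U}.Finite ∧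
      {H : (oT : V × ℕ) × HistoryGraph G j oT.1 oT.2 bp |
        H.2.U.card = n ∧ (x, t) ∈ H.2.U}.ncard ≤
        (1 + 2 * n) * (1 + Δ) ^ n * 4 ^ n * (1 + 2 ^ Δ) ^ n :=
  historyGraph_count_containing_vertex_general G Δ hΔ j x t bp n
end
end

section
/- Let ℋ = (𝒰, ℱ, 𝒰*) be a history graph for (o,T) for the j-threshold Consensus Process, and for s ∈ ℕ write U_s := {x ∈ V : (x,s) ∈ 𝒰} and Ū_s := {x ∈ V : (x,s) ∈ 𝒰 \ 𝒰*}. Then for every t with 2 ≤ t ≤ T, as an inequality of real numbers, 2·(Φ_E(G) − j + 1)·|Ū_t| ≤ (Δ − Φ_E(G))·|U_{t−1} \ Ū_t|. -/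
open Classical
noncomputable section

/-! Write `A = Ū_t`, `B = U_{t-1}` and `C = B \ A`. A vertex of `A` has `deg x - j + 1` oblique
edges into distinct vertices of `B`, hence fewer than `j` neighbours outside `B`. Counting
boundary edges, `|∂A| ≤ e(A, C) + (j - 1)|A|` and `|∂(A ∪ B)| ≤ (j - 1)|A| + Δ|C| - e(A, C)`,
where `e(A, C)` is the number of edges between `A` and `C`. Adding the expansion bounds
`Φ_E |A| ≤ |∂A|` and `Φ_E (|A| + |C|) ≤ |∂(A ∪ B)|` cancels `e(A, C)` and gives the inequality. -/

namespace Paper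

open Finset

section EdgeExpansion

variable {V : Type*} (G : SimpleGraph V) [DecidableRel G.Adj] [∀ v, Fintype (G.neighborSet v)]

lemma edgeExpansion_mul_card_le (K : Finset V) :
    edgeExpansion G * #K ≤ edgeBoundaryCard G K := by
  rcases K.eq_empty_or_nonempty with rfl | hK
  · simp
  have hbdd : BddBelow {r : ℝ | ∃ K : Finset V, K.Nonempty ∧
      r = (edgeBoundaryCard G K : ℝ) / #K} :=
    ⟨0, by rintro r ⟨K, -, rfl⟩; positivity⟩
  rw [← le_div_iff₀ (by exact_mod_cast hK.card_pos)]
  exact csInf_le hbdd ⟨K, hK, rfl⟩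

variable [DecidableEq V]

lemma edgeBoundaryCard_eq_sum_card_sdiff (K : Finset V) :
    edgeBoundaryCard G K = ∑ x ∈ K, #(G.neighborFinset x \ K) := by
  unfold edgeBoundaryCard
  simp_rw [← filter_notMem_eq_sdiff]
  congr! 3

lemma neighborFinset_inter_eq_filter (x : V) (S : Finset V) :
    G.neighborFinset x ∩ S = S.filter (G.Adj x) := by
  ext y
  simp [and_comm]

lemma sum_card_neighborFinset_inter_comm (A C : Finset V) :
    ∑ x ∈ A, #(G.neighborFinset x ∩ C) = ∑ y ∈ C, #(G.neighborFinset y ∩ A) := by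
  simp_rw [neighborFinset_inter_eq_filter]
  convert sum_card_bipartiteAbove_eq_sum_card_bipartiteBelow (r := G.Adj) using 3 <;>
    ext <;> simp [G.adj_comm]

variable {A B : Finset V} {j Δ : ℕ}

lemma edgeBoundaryCard_add_card_le (hA : ∀ x ∈ A, #(G.neighborFinset x \ B) < j) :
    edgeBoundaryCard G A + #A ≤ ∑ x ∈ A, #(G.neighborFinset x ∩ (B \ A)) + j * #A := by
  have hout : ∀ x ∈ A, #(G.neighborFinset x \ A) + 1 ≤ #(G.neighborFinset x ∩ (B \ A)) + j := by
    intro x hx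
    have hsub : G.neighborFinset x \ A ⊆
        (G.neighborFinset x \ B) ∪ (G.neighborFinset x ∩ (B \ A)) := by
      intro y
      simp only [mem_sdiff, mem_union, mem_inter]
      tauto
    have := (card_le_card hsub).trans (card_union_le _ _)
    have := hA x hx
    omega
  calc edgeBoundaryCard G A + #A = ∑ x ∈ A, (#(G.neighborFinset x \ A) + 1) := by
        rw [edgeBoundaryCard_eq_sum_card_sdiff, sum_add_distrib, card_eq_sum_ones]
    _ ≤ ∑ x ∈ A, (#(G.neighborFinset x ∩ (B \ A)) + j) := sum_le_sum hout
    _ = ∑ x ∈ A, #(G.neighborFinset x ∩ (B \ A)) + j * #A := by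
        rw [sum_add_distrib, sum_const, smul_eq_mul, mul_comm]

lemma edgeBoundaryCard_union_add_le (hA : ∀ x ∈ A, #(G.neighborFinset x \ B) < j)
    (hΔ : ∀ x, G.degree x ≤ Δ) :
    edgeBoundaryCard G (A ∪ B) + #A + ∑ x ∈ A, #(G.neighborFinset x ∩ (B \ A)) ≤
      j * #A + Δ * #(B \ A) := by
  have hA_sum : ∑ x ∈ A, (#(G.neighborFinset x \ (A ∪ B)) + 1) ≤ ∑ _x ∈ A, j := by
    refine sum_le_sum fun x hx => ?_
    have := card_le_card (sdiff_subset_sdiff (subset_refl (G.neighborFinset x))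
      (subset_union_right (s₁ := A) (s₂ := B)))
    have := hA x hx
    omega
  have hC_sum : ∑ y ∈ B \ A, (#(G.neighborFinset y \ (A ∪ B)) + #(G.neighborFinset y ∩ A)) ≤
      ∑ _y ∈ B \ A, Δ := by
    refine sum_le_sum fun y _ => ?_
    have := card_le_card (inter_subset_inter_left (subset_union_left (s₂ := B)) :
      G.neighborFinset y ∩ A ⊆ G.neighborFinset y ∩ (A ∪ B))
    have := card_sdiff_add_card_inter (G.neighborFinset y) (A ∪ B)
    rw [G.card_neighborFinset_eq_degree] at this
    have := hΔ y
    omega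
  rw [sum_add_distrib] at hA_sum hC_sum
  simp only [sum_const, smul_eq_mul, mul_one] at hA_sum hC_sum
  rw [edgeBoundaryCard_eq_sum_card_sdiff, ← union_sdiff_self_eq_union, sum_union disjoint_sdiff,
    union_sdiff_self_eq_union, sum_card_neighborFinset_inter_comm]
  linarith

theorem two_mul_edgeExpansion_sub_mul_card_le (hA : ∀ x ∈ A, #(G.neighborFinset x \ B) < j)
    (hΔ : ∀ x, G.degree x ≤ Δ) :
    2 * (edgeExpansion G - j + 1) * #A ≤ (Δ - edgeExpansion G) * #(B \ A) := by
  have hA_exp := edgeExpansion_mul_card_le G A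
  have hK_exp := edgeExpansion_mul_card_le G (A ∪ B)
  have hK_card : #(A ∪ B) = #(B \ A) + #A := by rw [union_comm, card_sdiff_add_card]
  rw [hK_card] at hK_exp
  have hA_bd : (edgeBoundaryCard G A + #A : ℝ) ≤
      ∑ x ∈ A, #(G.neighborFinset x ∩ (B \ A)) + j * #A := by
    exact_mod_cast edgeBoundaryCard_add_card_le G hA
  have hK_bd :
      (edgeBoundaryCard G (A ∪ B) + #A + ∑ x ∈ A, #(G.neighborFinset x ∩ (B \ A)) : ℝ) ≤
        j * #A + Δ * #(B \ A) := by
    exact_mod_cast edgeBoundaryCard_union_add_le G hA hΔ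
  push_cast at hK_exp
  linear_combination hA_exp + hK_exp + hA_bd + hK_bd

end EdgeExpansion

section HistoryGraph

variable {V : Type*} [DecidableEq V]

def timeSlice (S : Finset (V × ℕ)) (s : ℕ) : Finset V :=
  (S.filter fun u => u.2 = s).image Prod.fst

variable {G : SimpleGraph V} [DecidableRel G.Adj] [∀ v, Fintype (G.neighborSet v)]
  {j : ℕ} {o : V} {T : ℕ} {bp : Bool}

lemma HistoryGraph.degree_add_one_sub_le_card_neighborFinset_inter (H : HistoryGraph G j o T bp)
    {u : V × ℕ} (huU : u ∈ H.U) (hu : u ∉ H.Ustar) :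
    G.degree u.1 + 1 - j ≤ #(G.neighborFinset u.1 ∩ timeSlice H.U (u.2 - 1)) := by
  rw [← H.oblique_count u huU hu, filter_congr_decidable]
  refine card_le_card_of_injOn (fun e => e.2.1) (fun e he => ?_) (fun e he e' he' hee' => ?_)
  · obtain ⟨heF, rfl, hne⟩ := mem_filter.mp he
    have htime := H.edge_time e heF
    have hadj : G.Adj e.1.1 e.2.1 := (H.edge_space e heF).resolve_left (Ne.symm hne)
    simp only [mem_coe, mem_inter, G.mem_neighborFinset, timeSlice, mem_image, mem_filter]
    exact ⟨hadj, e.2, ⟨H.edge_mem_snd e heF, by omega⟩, rfl⟩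
  · obtain ⟨heF, rfl, -⟩ := mem_filter.mp he
    obtain ⟨he'F, he'1, -⟩ := mem_filter.mp he'
    have := H.edge_time e heF
    have := H.edge_time e' he'F
    exact Prod.ext he'1.symm (Prod.ext hee' (by rw [he'1] at *; omega))

lemma HistoryGraph.card_neighborFinset_sdiff_lt (H : HistoryGraph G j o T bp) {t : ℕ} {x : V}
    (hx : x ∈ timeSlice (H.U \ H.Ustar) t) :
    #(G.neighborFinset x \ timeSlice H.U (t - 1)) < j := by
  obtain ⟨u, hut, rfl⟩ := mem_image.mp hx
  obtain ⟨hu, rfl⟩ := mem_filter.mp hut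
  obtain ⟨huU, hu⟩ := mem_sdiff.mp hu
  have := H.degree_add_one_sub_le_card_neighborFinset_inter huU hu
  have := card_sdiff_add_card_inter (G.neighborFinset u.1) (timeSlice H.U (u.2 - 1))
  rw [G.card_neighborFinset_eq_degree] at this
  omega

end HistoryGraph

end Paper

open Paper in
theorem historyGraph_slice_inequality_CP_general
    {V : Type*} [DecidableEq V]
    (G : SimpleGraph V) [DecidableRel G.Adj] [∀ v, Fintype (G.neighborSet v)]
    (Δ : ℕ) (hΔ : IsLUB (Set.range fun x => G.degree x) Δ)
    (j : ℕ)
    (o : V) (T : ℕ) (H : HistoryGraph G j o T false)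
    (t : ℕ) :
    2 * (edgeExpansion G - j + 1) *
        (((H.U \ H.Ustar).filter fun u => u.2 = t).image Prod.fst).card ≤
      (Δ - edgeExpansion G) *
        (((H.U.filter fun u => u.2 = t - 1).image Prod.fst \
          ((H.U \ H.Ustar).filter fun u => u.2 = t).image Prod.fst).card) :=
  two_mul_edgeExpansion_sub_mul_card_le G (fun _ hx => H.card_neighborFinset_sdiff_lt hx)
    fun x => hΔ.1 ⟨x, rfl⟩

open Paper in
/-- the single-time-slice inequality (4.6) for a history graph for the
`j`-threshold Consensus Process:
`2(Φ_E − j + 1)|Ū_t| ≤ (Δ − Φ_E)|U_{t−1} \ Ū_t|` for all `2 ≤ t ≤ T`. -/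
theorem historyGraph_slice_inequality_CP
    {V : Type*} [Infinite V] [DecidableEq V]
    (G : SimpleGraph V) [DecidableRel G.Adj] [∀ v, Fintype (G.neighborSet v)]
    (hconn : G.Connected)
    (Δ : ℕ) (hΔ : IsLUB (Set.range fun x => G.degree x) Δ)
    (δ : ℕ) (hδ : IsGLB (Set.range fun x => G.degree x) δ)
    (j : ℕ) (hj1 : 1 ≤ j) (hjδ : j ≤ δ)
    (o : V) (T : ℕ) (H : HistoryGraph G j o T false)
    (t : ℕ) (ht2 : 2 ≤ t) (htT : t ≤ T) :
    2 * (edgeExpansion G - j + 1) *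
        (((H.U \ H.Ustar).filter fun u => u.2 = t).image Prod.fst).card ≤
      (Δ - edgeExpansion G) *
        (((H.U.filter fun u => u.2 = t - 1).image Prod.fst \
          ((H.U \ H.Ustar).filter fun u => u.2 = t).image Prod.fst).card) :=
  historyGraph_slice_inequality_CP_general G Δ hΔ j o T H t
end
end
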